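/- In the 5-agent, 7-good instance with desired sets R_1 = {1,2,7}, R_2 = {3,4,7}, R_3 = {5,6,7}, R_4 = {1,3,5}, R_5 = {2,4,6}, supplies s_7 = 2 and s_j = 1 for j ≠ 7: for every ρ ∈ (-∞, 1] (with ρ = 0 interpreted as Nash welfare), every allocation x ∈ Ψ_ρ(u) satisfies u_4(x_4) < 1/2. -/

import Mathlib

open scoped Classical
open Real

namespace BandwidthAlloc

/-- A bid: `none` denotes the special bid β; `some r` denotes the real bid `r ≥ 0`. -/
abbrev Bid := Option NNReal

/-- Numeric value of a bid (β is treated as 0 in arithmetic). -/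
noncomputable def bval (b : Bid) : ℝ := ((b.getD 0 : NNReal) : ℝ)

/-- A bid is positive when it is neither 0 nor β. -/
def posBid (b : Bid) : Prop := 0 < bval b

/-- Utility of the bundle `xi` for an agent with desired set `Ri`: `min_{j ∈ Ri} xi j`. -/
noncomputable def bundleUtil {m : ℕ} (Ri : Finset (Fin m)) (xi : Fin m → ℝ) : ℝ :=
  sInf (xi '' (Ri : Set (Fin m)))

/-- Bandwidth-allocation utility of agent `i` under allocation `x`. -/
noncomputable def util {n m : ℕ} (R : Fin n → Finset (Fin m))
    (x : Fin n → Fin m → ℝ) (i : Fin n) : ℝ :=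
  bundleUtil (R i) (x i)

/-- Weights: `w R i j = 1` iff `j ∈ R i`, else `0`. -/
noncomputable def w {n m : ℕ} (R : Fin n → Finset (Fin m)) (i : Fin n) (j : Fin m) : ℝ :=
  if j ∈ R i then 1 else 0

/-- A valid (nonnegative, supply-respecting) allocation. -/
def validAlloc {n m : ℕ} (s : Fin m → ℝ) (x : Fin n → Fin m → ℝ) : Prop :=
  (∀ i j, 0 ≤ x i j) ∧ ∀ j, ∑ i, x i j ≤ s j

/-- CES welfare of the utility vector `v` (`ρ = 0` is Nash welfare; for `ρ < 0` a zero
utility yields welfare `0`, the limiting convention). -/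
noncomputable def ces (ρ : ℝ) {n : ℕ} (v : Fin n → ℝ) : ℝ :=
  if ρ = 0 then ∏ i, v i
  else if ρ < 0 ∧ ∃ i, v i = 0 then 0
  else (∑ i, v i ^ ρ) ^ (1 / ρ)

/-- `Ψ_ρ`: `x` is a valid allocation maximizing CES welfare among valid allocations. -/
def maxCES (ρ : ℝ) {n m : ℕ} (s : Fin m → ℝ) (R : Fin n → Finset (Fin m))
    (x : Fin n → Fin m → ℝ) : Prop :=
  validAlloc s x ∧ ∀ y, validAlloc s y → ces ρ (util R y) ≤ ces ρ (util R x)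

/-- Constraint curve: continuous, normalized, strictly increasing, nonnegative on `[0,∞)`. -/
def IsConstraintCurve (f : ℝ → ℝ) : Prop :=
  ContinuousOn f (Set.Ici 0) ∧ f 0 = 0 ∧ StrictMonoOn f (Set.Ici 0) ∧
    ∀ y ∈ Set.Ici (0 : ℝ), 0 ≤ f y

/-- `g` is identically zero on `[0,∞)`. -/
def zeroOn (g : ℝ → ℝ) : Prop := ∀ y ∈ Set.Ici (0 : ℝ), g y = 0

/-- Price curve: continuous, normalized, nonnegative, and either strictly increasing or
identically zero on `[0,∞)`. -/
def IsPriceCurve (g : ℝ → ℝ) : Prop :=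
  ContinuousOn g (Set.Ici 0) ∧ g 0 = 0 ∧ (∀ y ∈ Set.Ici (0 : ℝ), 0 ≤ g y) ∧
    (StrictMonoOn g (Set.Ici 0) ∨ zeroOn g)

/-- Cost of the bundle `xi` under price curves `g`. -/
noncomputable def cost {m : ℕ} (g : Fin m → ℝ → ℝ) (xi : Fin m → ℝ) : ℝ :=
  ∑ j, g j (xi j)

/-- `xi` is in the demand set of an agent with desired set `Ri` under price curves `g`. -/
def inDemand {m : ℕ} (g : Fin m → ℝ → ℝ) (Ri : Finset (Fin m)) (xi : Fin m → ℝ) : Prop :=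
  (∀ j, 0 ≤ xi j) ∧ cost g xi ≤ 1 ∧
    ∀ yi : Fin m → ℝ, (∀ j, 0 ≤ yi j) → cost g yi ≤ 1 → bundleUtil Ri yi ≤ bundleUtil Ri xi

/-- Price curve equilibrium. -/
def isPCE {n m : ℕ} (s : Fin m → ℝ) (R : Fin n → Finset (Fin m))
    (x : Fin n → Fin m → ℝ) (g : Fin m → ℝ → ℝ) : Prop :=
  (∀ i, inDemand g (R i) (x i)) ∧ (∀ j, ∑ i, x i j ≤ s j) ∧
    ∀ j, ¬ zeroOn (g j) → ∑ i, x i j = s j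

/-- Step 1 of the ATP allocation rule: proportional sharing. -/
noncomputable def atp1 {n m : ℕ} (s : Fin m → ℝ) (b : Fin n → Fin m → Bid)
    (i : Fin n) (j : Fin m) : ℝ :=
  bval (b i j) / (∑ k, bval (b k j)) * s j

/-- Steps 1–2 of the ATP allocation rule: goods with a positive bid are shared
proportionally; on a good where everyone bids `0` or `β`, an agent bidding `β` receives
as much as she receives of some fixed good on which she bids positively. -/
noncomputable def atp2 {n m : ℕ} (s : Fin m → ℝ) (b : Fin n → Fin m → Bid)
    (i : Fin n) (j : Fin m) : ℝ :=
  if ∃ k, posBid (b k j) then atp1 s b i j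
  else if b i j = none then
    (if h : ∃ ℓ, posBid (b i ℓ) then atp1 s b i (Classical.choose h) else 0)
  else 0

/-- The full ATP allocation rule (steps 1–3): agents bidding `β` on an oversubscribed
step-2 good are penalized with the zero bundle. -/
noncomputable def atp {n m : ℕ} (s : Fin m → ℝ) (b : Fin n → Fin m → Bid)
    (i : Fin n) (j : Fin m) : ℝ :=
  if ∃ ℓ, (¬ ∃ k, posBid (b k ℓ)) ∧ b i ℓ = none ∧ s ℓ < ∑ k, atp2 s b k ℓ then 0
  else atp2 s b i j

/-- Total bid-constraint cost `C_f(b_i)` of agent `i`'s bid vector. -/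
noncomputable def bidCost {m : ℕ} (f : Fin m → ℝ → ℝ) (bi : Fin m → Bid) : ℝ :=
  ∑ j, f j (bval (bi j))

/-- A bid vector is feasible if it obeys the bid constraint `C_f(b_i) ≤ 1`. -/
def feasibleBid {m : ℕ} (f : Fin m → ℝ → ℝ) (bi : Fin m → Bid) : Prop :=
  bidCost f bi ≤ 1

/-- `b` is a Nash equilibrium of `ATP(f)`: all bids are feasible and no agent can
strictly increase her utility by a unilateral feasible deviation. -/
def isNE {n m : ℕ} (s : Fin m → ℝ) (f : Fin m → ℝ → ℝ)
    (R : Fin n → Finset (Fin m)) (b : Fin n → Fin m → Bid) : Prop :=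
  (∀ i, feasibleBid f (b i)) ∧
    ∀ (i : Fin n) (bi' : Fin m → Bid), feasibleBid f bi' →
      util R (atp s (Function.update b i bi')) i ≤ util R (atp s b) i

/-- `NE_X(ATP(f))`: allocations arising from Nash equilibrium bid profiles. -/
def NEX {n m : ℕ} (s : Fin m → ℝ) (f : Fin m → ℝ → ℝ)
    (R : Fin n → Finset (Fin m)) : Set (Fin n → Fin m → ℝ) :=
  {x | ∃ b, isNE s f R b ∧ x = atp s b}

/-- `f` is homogeneous of degree `α` on the nonnegative reals. -/
def Homog (f : ℝ → ℝ) (α : ℝ) : Prop :=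
  ∀ c ≥ (0 : ℝ), ∀ y ≥ (0 : ℝ), f (c * y) = c ^ α * f y

/-- `γ* = max {γ ≥ 0 : γ · Σ_i w_{ij} ≤ s_j for all j}` of Mechanism 1. -/
noncomputable def gammaStar {n m : ℕ} (s : Fin m → ℝ) (R : Fin n → Finset (Fin m)) : ℝ :=
  sSup {γ : ℝ | 0 ≤ γ ∧ ∀ j, γ * ∑ i, w R i j ≤ s j}

/-- Mechanism 1: `x i j = γ* · w i j`. -/
noncomputable def mech1 {n m : ℕ} (s : Fin m → ℝ) (R : Fin n → Finset (Fin m)) :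
    Fin n → Fin m → ℝ :=
  fun i j => gammaStar s R * w R i j

/-- `min_i u_i(x_i)`. -/
noncomputable def minUtil {n m : ℕ} (R : Fin n → Finset (Fin m))
    (x : Fin n → Fin m → ℝ) : ℝ :=
  sInf (Set.range fun i => util R x i)

/-- `x` is maxmin-optimal: valid and attaining the maximum of `min_i u_i` over valid
allocations. -/
def maxminOptimal {n m : ℕ} (s : Fin m → ℝ) (R : Fin n → Finset (Fin m))
    (x : Fin n → Fin m → ℝ) : Prop :=
  validAlloc s x ∧ ∀ y, validAlloc s y → minUtil R y ≤ minUtil R x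

/-- Mechanism 2: `P i k` is the set agent `i` claims agent `k` desires.
`eta P i = |{k : R_k(k) ≠ R_k(i)}|`. -/
noncomputable def eta {n m : ℕ} (P : Fin n → Fin n → Finset (Fin m)) (i : Fin n) : ℕ :=
  (Finset.univ.filter fun k => P k k ≠ P i k).card

/-- Agent `i` is in `N̄`: for some `k`, `R_k(k) ⊊ R_k(i)`. -/
def inNbar {n m : ℕ} (P : Fin n → Fin n → Finset (Fin m)) (i : Fin n) : Prop :=
  ∃ k, P k k ⊂ P i k

/-- The penalty factor `α_i` of Mechanism 2. -/
noncomputable def alpha {n m : ℕ} (P : Fin n → Fin n → Finset (Fin m)) (i : Fin n) : ℝ :=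
  if inNbar P i then 0 else 1 - (eta P i : ℝ) / n

/-- Effective reported sets of Mechanism 2: agents in `N̄` are replaced by `∅`. -/
noncomputable def effSets {n m : ℕ} (P : Fin n → Fin n → Finset (Fin m)) :
    Fin n → Finset (Fin m) :=
  fun i => if inNbar P i then ∅ else P i i

/-- Mechanism 2: the allocation `x_i = α_i · y_i` where `y` is the Mechanism 1 outcome
on the effective sets. -/
noncomputable def mech2 {n m : ℕ} (s : Fin m → ℝ) (P : Fin n → Fin n → Finset (Fin m)) :
    Fin n → Fin m → ℝ :=
  fun i j => alpha P i * mech1 s (effSets P) i j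

end BandwidthAlloc

/-!
If agent `3` had utility at least `1/2`, then, since agents `2, 3` share good `4`, agents
`1, 3` share good `2` and agents `0, 4` share good `1` (each of supply `1`), the utilities
would satisfy `u₂ ≤ 1/2`, `u₁ + u₃ ≤ 1`, `u₀ + u₄ ≤ 1`. Measured by the concave increasing
isoelastic utility `φ_ρ`, whose sum orders CES welfare, such a vector is worth at most
`5 φ_ρ(1/2)`. Giving `1 - t` to agents `0, 1, 2` and `t` to agents `3, 4` is feasible for
`t ≥ 1/3` (good `6` has supply `2`), and `t ↦ 3 φ_ρ(1 - t) + 2 φ_ρ(t)` has derivative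
`-(1/2)^(ρ-1) < 0` at `t = 1/2`, so some `t < 1/2` does strictly better.
-/

open Set Filter Topology

lemma exists_mem_Ioo_lt_of_hasDerivAt_neg {f : ℝ → ℝ} {f' a b : ℝ} (hf : HasDerivAt f f' a)
    (hf' : f' < 0) (hb : b < a) : ∃ t ∈ Ioo b a, f a < f t := by
  have hslope : Tendsto (slope f a) (𝓝[<] a) (𝓝 f') :=
    (hasDerivWithinAt_iff_tendsto_slope' (s := Iio a) (lt_irrefl a)).1 hf.hasDerivWithinAt
  obtain ⟨t, hneg, ht⟩ :=
    ((hslope.eventually (gt_mem_nhds hf')).and (Ioo_mem_nhdsLT hb)).exists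
  refine ⟨t, ht, ?_⟩
  rw [slope_def_field, div_neg_iff] at hneg
  rcases hneg with ⟨hgain, -⟩ | ⟨-, hta⟩
  · linarith
  · linarith [ht.2]

lemma ConcaveOn.add_le_two_mul_of_add_le {S : Set ℝ} {f : ℝ → ℝ} (hf : ConcaveOn ℝ S f)
    (hmono : MonotoneOn f S) {a b c : ℝ} (ha : a ∈ S) (hb : b ∈ S) (hc : c ∈ S)
    (h : a + b ≤ 2 * c) : f a + f b ≤ 2 * f c := by
  have hhalf : (0 : ℝ) ≤ 1 / 2 := by norm_num
  have hmid := hf.2 ha hb hhalf hhalf (by norm_num)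
  have hle := hmono (hf.1 ha hb hhalf hhalf (by norm_num)) hc
    (by simp only [smul_eq_mul]; linarith)
  simp only [smul_eq_mul] at hmid hle
  linarith

namespace BandwidthAlloc

section BundleUtil

variable {m : ℕ} {Ri : Finset (Fin m)} {xi : Fin m → ℝ}

lemma bundleUtil_le {j : Fin m} (hj : j ∈ Ri) : bundleUtil Ri xi ≤ xi j :=
  csInf_le ((Ri : Set (Fin m)).toFinite.image xi).bddBelow ⟨j, hj, rfl⟩

lemma bundleUtil_nonneg (h : ∀ j, 0 ≤ xi j) : 0 ≤ bundleUtil Ri xi :=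
  Real.sInf_nonneg (by rintro _ ⟨j, -, rfl⟩; exact h j)

lemma bundleUtil_eq_of_forall_eq {c : ℝ} (hne : Ri.Nonempty) (h : ∀ j ∈ Ri, xi j = c) :
    bundleUtil Ri xi = c := by
  obtain ⟨j, hj⟩ := hne
  refine le_antisymm ((bundleUtil_le hj).trans_eq (h j hj)) (le_csInf ⟨xi j, j, hj, rfl⟩ ?_)
  rintro _ ⟨k, hk, rfl⟩
  exact (h k hk).ge

end BundleUtil

section Allocation

variable {n m : ℕ} {s : Fin m → ℝ} {R : Fin n → Finset (Fin m)} {x : Fin n → Fin m → ℝ}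

lemma util_nonneg (hx : validAlloc s x) (i : Fin n) : 0 ≤ util R x i :=
  bundleUtil_nonneg (hx.1 i)

lemma util_add_util_le (hx : validAlloc s x) {i k : Fin n} (hik : i ≠ k) {j : Fin m}
    (hi : j ∈ R i) (hk : j ∈ R k) : util R x i + util R x k ≤ s j :=
  calc util R x i + util R x k ≤ x i j + x k j := add_le_add (bundleUtil_le hi) (bundleUtil_le hk)
    _ = ∑ l ∈ {i, k}, x l j := (Finset.sum_pair (f := fun l => x l j) hik).symm
    _ ≤ ∑ l, x l j := Finset.sum_le_sum_of_subset_of_nonneg (Finset.subset_univ _)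
        fun l _ _ => hx.1 l j
    _ ≤ s j := hx.2 j

noncomputable def allocOfUtil (R : Fin n → Finset (Fin m)) (v : Fin n → ℝ) :
    Fin n → Fin m → ℝ :=
  fun i j => if j ∈ R i then v i else 0

lemma util_allocOfUtil (v : Fin n → ℝ) (hR : ∀ i, (R i).Nonempty) :
    util R (allocOfUtil R v) = v :=
  funext fun i => bundleUtil_eq_of_forall_eq (hR i) fun _ hj => if_pos hj

end Allocation

/-- `∑ i, isoelastic ρ (v i)` orders positive vectors as CES welfare does, and its derivative is
`z ^ (ρ - 1)` for every `ρ`, so Nash welfare (`ρ = 0`, `log`) needs no separate treatment. -/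
noncomputable def isoelastic (ρ z : ℝ) : ℝ :=
  if ρ = 0 then log z else z ^ ρ / ρ

lemma hasDerivAt_isoelastic (ρ : ℝ) {z : ℝ} (hz : 0 < z) :
    HasDerivAt (isoelastic ρ) (z ^ (ρ - 1)) z := by
  unfold isoelastic
  rcases eq_or_ne ρ 0 with rfl | hρ
  · simpa [Real.rpow_neg_one] using Real.hasDerivAt_log hz.ne'
  · simp only [hρ, if_false]
    simpa only [mul_div_cancel_left₀ _ hρ] using
      (Real.hasDerivAt_rpow_const (p := ρ) (Or.inl hz.ne')).div_const ρ

lemma strictMonoOn_isoelastic (ρ : ℝ) : StrictMonoOn (isoelastic ρ) (Ioi 0) :=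
  strictMonoOn_of_hasDerivWithinAt_pos (convex_Ioi 0)
    (fun _ hz => (hasDerivAt_isoelastic ρ hz).continuousAt.continuousWithinAt)
    (fun _ hz => (hasDerivAt_isoelastic ρ (interior_subset hz)).hasDerivWithinAt)
    (fun _ hz => Real.rpow_pos_of_pos (interior_subset hz) _)

lemma concaveOn_isoelastic_Ioi {ρ : ℝ} (hρ : ρ ≤ 1) : ConcaveOn ℝ (Ioi 0) (isoelastic ρ) := by
  refine AntitoneOn.concaveOn_of_deriv (convex_Ioi 0)
    (fun _ hz => (hasDerivAt_isoelastic ρ hz).continuousAt.continuousWithinAt) ?_ ?_ <;>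
    rw [interior_Ioi]
  · exact fun _ hz => (hasDerivAt_isoelastic ρ hz).differentiableAt.differentiableWithinAt
  · intro a ha b hb hab
    rw [(hasDerivAt_isoelastic ρ ha).deriv, (hasDerivAt_isoelastic ρ hb).deriv]
    exact Real.rpow_le_rpow_of_nonpos ha hab (by linarith)

lemma isoelastic_of_pos {ρ : ℝ} (hρ : 0 < ρ) : isoelastic ρ = fun z => ρ⁻¹ • z ^ ρ := by
  ext z
  simp [isoelastic, hρ.ne', div_eq_inv_mul]

lemma concaveOn_isoelastic_Ici {ρ : ℝ} (hρ₀ : 0 < ρ) (hρ₁ : ρ ≤ 1) :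
    ConcaveOn ℝ (Ici 0) (isoelastic ρ) := by
  rw [isoelastic_of_pos hρ₀]
  exact (Real.concaveOn_rpow hρ₀.le hρ₁).smul (inv_nonneg.2 hρ₀.le)

lemma monotoneOn_isoelastic_Ici {ρ : ℝ} (hρ : 0 < ρ) : MonotoneOn (isoelastic ρ) (Ici 0) := by
  rw [isoelastic_of_pos hρ]
  exact fun a ha b _ hab =>
    smul_le_smul_of_nonneg_left (Real.rpow_le_rpow ha hab hρ.le) (inv_nonneg.2 hρ.le)

lemma exists_isoelastic_gain (ρ : ℝ) : ∃ t ∈ Ioo (1 / 3 : ℝ) (1 / 2),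
    5 * isoelastic ρ (1 / 2) < 3 * isoelastic ρ (1 - t) + 2 * isoelastic ρ t := by
  have hG : HasDerivAt (fun t => 3 * isoelastic ρ (1 - t) + 2 * isoelastic ρ t)
      (-(1 / 2 : ℝ) ^ (ρ - 1)) (1 / 2) := by
    have h₁ := ((hasDerivAt_isoelastic ρ (z := 1 - 1 / 2) (by norm_num)).comp_const_sub 1
      (1 / 2)).const_mul 3
    have h₂ := (hasDerivAt_isoelastic ρ (z := 1 / 2) (by norm_num)).const_mul 2
    exact (h₁.add h₂).congr_deriv (by norm_num; ring)
  obtain ⟨t, ht, hlt⟩ := exists_mem_Ioo_lt_of_hasDerivAt_neg hG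
    (neg_neg_of_pos (by positivity)) (by norm_num : (1 / 3 : ℝ) < 1 / 2)
  refine ⟨t, ht, ?_⟩
  norm_num at hlt
  linarith

section Ces

variable {n : ℕ} {ρ : ℝ} {v w : Fin n → ℝ}

lemma ces_eq_zero_of_nonpos (hρ : ρ ≤ 0) (hv : ∃ i, v i = 0) : ces ρ v = 0 := by
  unfold ces
  rcases hρ.lt_or_eq with hρ | rfl
  · simp [hρ.ne, hρ, hv]
  · obtain ⟨i, hi⟩ := hv
    simp [Finset.prod_eq_zero (Finset.mem_univ i) hi]

lemma ces_pos [NeZero n] (hv : ∀ i, 0 < v i) : 0 < ces ρ v := by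
  unfold ces
  split_ifs with hρ hz
  · exact Finset.prod_pos fun i _ => hv i
  · obtain ⟨-, i, hi⟩ := hz
    exact absurd hi (hv i).ne'
  · exact Real.rpow_pos_of_pos
      (Finset.sum_pos (fun i _ => Real.rpow_pos_of_pos (hv i) _) Finset.univ_nonempty) _

lemma ces_lt_ces_of_nonneg (hρ : 0 < ρ) (hv : ∀ i, 0 ≤ v i)
    (h : ∑ i, isoelastic ρ (v i) < ∑ i, isoelastic ρ (w i)) : ces ρ v < ces ρ w := by
  simp only [isoelastic, hρ.ne', if_false, ← Finset.sum_div] at h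
  simp only [ces, hρ.ne', hρ.not_gt, false_and, if_false]
  exact Real.rpow_lt_rpow (Finset.sum_nonneg fun i _ => Real.rpow_nonneg (hv i) _)
    ((div_lt_div_iff_of_pos_right hρ).1 h) (one_div_pos.2 hρ)

lemma ces_lt_ces_of_pos [NeZero n] (hv : ∀ i, 0 < v i) (hw : ∀ i, 0 < w i)
    (h : ∑ i, isoelastic ρ (v i) < ∑ i, isoelastic ρ (w i)) : ces ρ v < ces ρ w := by
  rcases lt_trichotomy ρ 0 with hρ | rfl | hρ
  · simp only [isoelastic, hρ.ne, if_false, ← Finset.sum_div] at h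
    have hvz : ¬ ∃ i, v i = 0 := fun ⟨i, hi⟩ => (hv i).ne' hi
    have hwz : ¬ ∃ i, w i = 0 := fun ⟨i, hi⟩ => (hw i).ne' hi
    simp only [ces, hρ.ne, hvz, hwz, and_false, if_false]
    exact Real.rpow_lt_rpow_of_neg
      (Finset.sum_pos (fun i _ => Real.rpow_pos_of_pos (hw i) _) Finset.univ_nonempty)
      ((div_lt_div_right_of_neg hρ).1 h) (one_div_neg.2 hρ)
  · simp only [isoelastic, if_true] at h
    rw [← Real.log_prod fun i _ => (hv i).ne', ← Real.log_prod fun i _ => (hw i).ne'] at h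
    simp only [ces, if_true]
    exact (Real.log_lt_log_iff (Finset.prod_pos fun i _ => hv i)
      (Finset.prod_pos fun i _ => hw i)).1 h
  · exact ces_lt_ces_of_nonneg hρ (fun i => (hv i).le) h

end Ces

lemma sum_le_five_mul_of_pair_bounds {S : Set ℝ} {f : ℝ → ℝ} (hf : ConcaveOn ℝ S f)
    (hmono : MonotoneOn f S) {u : Fin 5 → ℝ} (hu : ∀ i, u i ∈ S) (hhalf : 1 / 2 ∈ S)
    (h04 : u 0 + u 4 ≤ 1) (h13 : u 1 + u 3 ≤ 1) (h2 : u 2 ≤ 1 / 2) :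
    ∑ i, f (u i) ≤ 5 * f (1 / 2) := by
  have p04 := hf.add_le_two_mul_of_add_le hmono (hu 0) (hu 4) hhalf (by linarith)
  have p13 := hf.add_le_two_mul_of_add_le hmono (hu 1) (hu 3) hhalf (by linarith)
  have p2 := hmono (hu 2) hhalf h2
  rw [Fin.sum_univ_five]
  linarith

lemma ces_lt_ces_of_pair_bounds {ρ t : ℝ} (hρ : ρ ≤ 1) {u : Fin 5 → ℝ} (hu : ∀ i, 0 ≤ u i)
    (h04 : u 0 + u 4 ≤ 1) (h13 : u 1 + u 3 ≤ 1) (h2 : u 2 ≤ 1 / 2)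
    (ht : t ∈ Ioo (1 / 3 : ℝ) (1 / 2))
    (hgain : 5 * isoelastic ρ (1 / 2) < 3 * isoelastic ρ (1 - t) + 2 * isoelastic ρ t) :
    ces ρ u < ces ρ ![1 - t, 1 - t, 1 - t, t, t] := by
  have hv : ∀ i, 0 < ![1 - t, 1 - t, 1 - t, t, t] i := by
    intro i
    fin_cases i <;> simp <;> linarith [ht.1, ht.2]
  have hsum : 5 * isoelastic ρ (1 / 2) < ∑ i, isoelastic ρ (![1 - t, 1 - t, 1 - t, t, t] i) := by
    simp only [Fin.sum_univ_five, Matrix.cons_val]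
    linarith
  rcases le_or_gt ρ 0 with hρ₀ | hρ₀
  · by_cases hu' : ∀ i, 0 < u i
    · refine ces_lt_ces_of_pos hu' hv (lt_of_le_of_lt ?_ hsum)
      exact sum_le_five_mul_of_pair_bounds (concaveOn_isoelastic_Ioi hρ)
        (strictMonoOn_isoelastic ρ).monotoneOn hu' (by norm_num) h04 h13 h2
    · obtain ⟨i, hi⟩ := not_forall.1 hu'
      rw [ces_eq_zero_of_nonpos hρ₀ ⟨i, le_antisymm (not_lt.1 hi) (hu i)⟩]
      exact ces_pos hv
  · refine ces_lt_ces_of_nonneg hρ₀ hu (lt_of_le_of_lt ?_ hsum)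
    exact sum_le_five_mul_of_pair_bounds (concaveOn_isoelastic_Ici hρ₀ hρ)
      (monotoneOn_isoelastic_Ici hρ₀) hu (by norm_num) h04 h13 h2

abbrev truthfulSupply : Fin 7 → ℝ := fun j => if j = (6 : Fin 7) then 2 else 1

abbrev truthfulSets : Fin 5 → Finset (Fin 7) :=
  ![{0, 1, 6}, {2, 3, 6}, {4, 5, 6}, {0, 2, 4}, {1, 3, 5}]

lemma validAlloc_allocOfUtil_truthful {t : ℝ} (ht₁ : 1 / 3 ≤ t) (ht₂ : t ≤ 1) :
    validAlloc truthfulSupply (allocOfUtil truthfulSets ![1 - t, 1 - t, 1 - t, t, t]) := by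
  refine ⟨fun i j => ?_, fun j => ?_⟩
  · unfold allocOfUtil
    split_ifs
    · fin_cases i <;> simp <;> linarith
    · exact le_rfl
  · fin_cases j <;> simp [allocOfUtil, truthfulSupply, Fin.sum_univ_five]
    linarith

/-- Agents and goods are indexed from `0`: the paper's agent 4 is `3` and its good 7 is `6`. -/
theorem truthful_less_half (ρ : ℝ) (hρ : ρ ≤ 1) (x : Fin 5 → Fin 7 → ℝ)
    (hx : maxCES ρ (fun j => if j = (6 : Fin 7) then 2 else 1)
      (![{0, 1, 6}, {2, 3, 6}, {4, 5, 6}, {0, 2, 4}, {1, 3, 5}] :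
        Fin 5 → Finset (Fin 7)) x) :
    util (![{0, 1, 6}, {2, 3, 6}, {4, 5, 6}, {0, 2, 4}, {1, 3, 5}] :
        Fin 5 → Finset (Fin 7)) x 3 < 1 / 2 := by
  obtain ⟨hvalid, hmax⟩ := hx
  by_contra! h3
  have h04 : util truthfulSets x 0 + util truthfulSets x 4 ≤ 1 :=
    util_add_util_le hvalid (i := 0) (k := 4) (j := 1) (by decide) (by decide) (by decide)
  have h13 : util truthfulSets x 1 + util truthfulSets x 3 ≤ 1 :=
    util_add_util_le hvalid (i := 1) (k := 3) (j := 2) (by decide) (by decide) (by decide)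
  have h23 : util truthfulSets x 2 + util truthfulSets x 3 ≤ 1 :=
    util_add_util_le hvalid (i := 2) (k := 3) (j := 4) (by decide) (by decide) (by decide)
  obtain ⟨t, ht, hgain⟩ := exists_isoelastic_gain ρ
  have hy := hmax _ (validAlloc_allocOfUtil_truthful ht.1.le (by linarith [ht.2]))
  rw [util_allocOfUtil _ (by decide)] at hy
  exact hy.not_gt (ces_lt_ces_of_pair_bounds hρ (util_nonneg hvalid) h04 h13 (by linarith) ht hgain)

end BandwidthAlloc
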